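/- Let ν ∈ (0,1), x_T ∈ ℝ², and let x_A, x_D : ℝ → ℝ² be differentiable with x_A(t) ≠ x_D(t) for all t. Define x_C(t), ρ(t), and x_B(t) = x_C(t) + ρ(t)·(x_T − x_C(t))/‖x_T − x_C(t)‖ as for the Apollonius circle, assuming x_T ≠ x_C(t). If both players move at their maximal speeds directly toward the current capture point, i.e., ẋ_A(t) = ν·(x_B(t) − x_A(t))/‖x_B(t) − x_A(t)‖ and ẋ_D(t) = (x_B(t) − x_D(t))/‖x_B(t) − x_D(t)‖ (with x_B(t) ≠ x_A(t), x_B(t) ≠ x_D(t)), then ẋ_B(t) = 0 for all t. -/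

import Mathlib

open scoped RealInnerProductSpace

private lemma hasDerivAt_norm_comp {E : Type*} [NormedAddCommGroup E] [InnerProductSpace ℝ E]
    {f : ℝ → E} {f' : E} {t : ℝ} (hf : HasDerivAt f f' t) (h0 : f t ≠ 0) :
    HasDerivAt (fun s => ‖f s‖) (⟪f t, f'⟫ / ‖f t‖) t := by
  have h1 : HasDerivAt (fun s => ⟪f s, f s⟫) (⟪f t, f'⟫ + ⟪f', f t⟫) t := hf.inner ℝ hf
  have h2 : (⟪f t, f t⟫ : ℝ) ≠ 0 := by
    simpa [real_inner_self_eq_norm_sq] using pow_ne_zero 2 (norm_ne_zero_iff.mpr h0)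
  have h3 := h1.sqrt h2
  have h4 : (fun s => Real.sqrt ⟪f s, f s⟫) = fun s => ‖f s‖ := by
    funext s; rw [real_inner_self_eq_norm_sq, Real.sqrt_sq (norm_nonneg _)]
  rw [h4] at h3
  convert h3 using 1
  rw [real_inner_self_eq_norm_sq, Real.sqrt_sq (norm_nonneg _), real_inner_comm f' (f t)]
  ring

set_option maxHeartbeats 1000000 in
/-- Equilibrium part of Lemma 1: under the saddle-point feedback strategies
(both players head at full speed toward the current capture point `x_B`),
the capture point is stationary. -/
theorem capture_point_stationary_under_equilibrium
    (ν : ℝ) (hν : ν ∈ Set.Ioo (0:ℝ) 1)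
    (xT : EuclideanSpace ℝ (Fin 2))
    (xA xD : ℝ → EuclideanSpace ℝ (Fin 2))
    (xC xB : ℝ → EuclideanSpace ℝ (Fin 2)) (ρ : ℝ → ℝ)
    (hAD : ∀ t, xA t ≠ xD t)
    (hC : ∀ t, xC t = (1/(1-ν^2)) • xA t - (ν^2/(1-ν^2)) • xD t)
    (hρ : ∀ t, ρ t = (ν/(1-ν^2)) * ‖xA t - xD t‖)
    (hTC : ∀ t, xT ≠ xC t)
    (hB : ∀ t, xB t = xC t + (ρ t / ‖xT - xC t‖) • (xT - xC t))
    (hBA : ∀ t, xB t ≠ xA t) (hBD : ∀ t, xB t ≠ xD t)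
    (hA : ∀ t, HasDerivAt xA ((ν / ‖xB t - xA t‖) • (xB t - xA t)) t)
    (hD : ∀ t, HasDerivAt xD ((1 / ‖xB t - xD t‖) • (xB t - xD t)) t) :
    ∀ t, HasDerivAt xB (0 : EuclideanSpace ℝ (Fin 2)) t := by
  obtain ⟨hν0, hν1⟩ := hν
  have hν2 : (0:ℝ) < 1 - ν^2 := by nlinarith
  intro t
  set A : EuclideanSpace ℝ (Fin 2) := xA t with hAdef
  set D : EuclideanSpace ℝ (Fin 2) := xD t with hDdef
  set B : EuclideanSpace ℝ (Fin 2) := xB t with hBdef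
  set w : EuclideanSpace ℝ (Fin 2) := xT - xC t with hwdef
  have hnAD : (0:ℝ) < ‖A - D‖ := by
    rw [norm_pos_iff, sub_ne_zero]; exact hAD t
  have hnw : (0:ℝ) < ‖w‖ := by
    rw [norm_pos_iff, hwdef, sub_ne_zero]; exact hTC t
  have hnBA : (0:ℝ) < ‖B - A‖ := by
    rw [norm_pos_iff, sub_ne_zero]; exact hBA t
  have hnBD : (0:ℝ) < ‖B - D‖ := by
    rw [norm_pos_iff, sub_ne_zero]; exact hBD t
  have hρt : ρ t = (ν/(1-ν^2)) * ‖A - D‖ := hρ t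
  have hwne : ‖w‖ ≠ 0 := ne_of_gt hnw
  have hADne : ‖A - D‖ ≠ 0 := ne_of_gt hnAD
  have hBAne : ‖B - A‖ ≠ 0 := ne_of_gt hnBA
  have hBDne : ‖B - D‖ ≠ 0 := ne_of_gt hnBD
  have hν2ne : (1:ℝ) - ν^2 ≠ 0 := ne_of_gt hν2
  have hνne : ν ≠ 0 := ne_of_gt hν0
  have hρpos : (0:ℝ) < ρ t := by
    rw [hρt]; positivity
  -- decompositions of B - A and B - D
  have hBAv : B - A = (ν^2/(1-ν^2)) • (A - D) + (ρ t / ‖w‖) • w := by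
    rw [hBdef, hB t, ← hwdef, hC t, ← hAdef, ← hDdef]
    match_scalars <;> (field_simp; try ring)
  have hBDv : B - D = (1/(1-ν^2)) • (A - D) + (ρ t / ‖w‖) • w := by
    rw [hBdef, hB t, ← hwdef, hC t, ← hAdef, ← hDdef]
    match_scalars <;> (field_simp; try ring)
  -- Apollonius property: ‖B - A‖ = ν * ‖B - D‖
  have hApoll : ‖B - A‖ = ν * ‖B - D‖ := by
    have e1 : ‖B - A‖^2 =
        ⟪(ν^2/(1-ν^2)) • (A - D) + (ρ t / ‖w‖) • w,
          (ν^2/(1-ν^2)) • (A - D) + (ρ t / ‖w‖) • w⟫ := by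
      rw [← hBAv]; exact (real_inner_self_eq_norm_sq _).symm
    have e2 : ‖B - D‖^2 =
        ⟪(1/(1-ν^2)) • (A - D) + (ρ t / ‖w‖) • w,
          (1/(1-ν^2)) • (A - D) + (ρ t / ‖w‖) • w⟫ := by
      rw [← hBDv]; exact (real_inner_self_eq_norm_sq _).symm
    simp only [inner_add_left, inner_add_right, real_inner_smul_left, real_inner_smul_right,
      real_inner_comm w (A - D)] at e1 e2
    simp only [real_inner_self_eq_norm_sq] at e1 e2
    have hsq : ‖B - A‖^2 = (ν * ‖B - D‖)^2 := by
      rw [e1, mul_pow, e2, hρt]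
      field_simp
      ring
    calc ‖B - A‖ = Real.sqrt (‖B - A‖^2) := (Real.sqrt_sq (norm_nonneg _)).symm
      _ = Real.sqrt ((ν * ‖B - D‖)^2) := by rw [hsq]
      _ = ν * ‖B - D‖ := Real.sqrt_sq (by positivity)
  -- derivative of xC
  have hA' := hA t
  have hD' := hD t
  rw [← hBdef, ← hAdef] at hA'
  rw [← hBdef, ← hDdef] at hD'
  set lam : ℝ := ν * ρ t / (‖B - A‖ * ‖w‖) with hlamdef
  have hxCfun : xC = fun s => (1/(1-ν^2)) • xA s - (ν^2/(1-ν^2)) • xD s := funext hC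
  have hcC : HasDerivAt xC (lam • w) t := by
    have heq : ((1:ℝ)/(1-ν^2)) • ((ν / ‖B - A‖) • (B - A))
        - (ν^2/(1-ν^2)) • ((1 / ‖B - D‖) • (B - D)) = lam • w := by
      obtain ⟨nBD, hn⟩ : ∃ x, x = ‖B - D‖ := ⟨_, rfl⟩
      have hnne : nBD ≠ 0 := by rw [hn]; exact hBDne
      rw [hlamdef, hApoll, ← hn, hBAv, hBDv]
      match_scalars <;> (field_simp; try ring)
    rw [hxCfun, ← heq]
    exact (hA'.const_smul ((1:ℝ)/(1-ν^2))).sub (hD'.const_smul (ν^2/(1-ν^2)))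
  -- derivative of w-function
  have hw' : HasDerivAt (fun s => xT - xC s) (-(lam • w)) t := by
    have h := (hasDerivAt_const t xT).sub hcC
    rwa [zero_sub] at h
  -- derivative of ‖w‖
  have hnw' : HasDerivAt (fun s => ‖xT - xC s‖) (-(lam * ‖w‖)) t := by
    have h := hasDerivAt_norm_comp hw' (by rw [← hwdef]; exact norm_pos_iff.mp hnw)
    rw [← hwdef] at h
    convert h using 1
    rw [inner_neg_right, real_inner_smul_right, real_inner_self_eq_norm_sq]
    field_simp
  -- derivative of ρ
  have hAmD : HasDerivAt (fun s => xA s - xD s)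
      ((ν / ‖B - A‖) • (B - A) - (1 / ‖B - D‖) • (B - D)) t := hA'.sub hD'
  have hdirAD : (ν / ‖B - A‖) • (B - A) - (1 / ‖B - D‖) • (B - D)
      = -((ν / ‖B - A‖) • (A - D)) := by
    obtain ⟨nBD, hn⟩ : ∃ x, x = ‖B - D‖ := ⟨_, rfl⟩
    have hnne : nBD ≠ 0 := by rw [hn]; exact hBDne
    rw [hApoll, ← hn, hBAv, hBDv]
    match_scalars <;> (field_simp; try ring)
  have hρ' : HasDerivAt ρ (-(lam * ‖w‖)) t := by
    have hnormAD : HasDerivAt (fun s => ‖xA s - xD s‖)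
        (⟪A - D, (ν / ‖B - A‖) • (B - A) - (1 / ‖B - D‖) • (B - D)⟫ / ‖A - D‖) t := by
      exact hasDerivAt_norm_comp hAmD (by rw [← hAdef, ← hDdef, sub_ne_zero]; exact hAD t)
    have hfun : ρ = fun s => (ν/(1-ν^2)) * ‖xA s - xD s‖ := funext hρ
    have heq : (ν/(1-ν^2)) * (⟪A - D, (ν / ‖B - A‖) • (B - A)
        - (1 / ‖B - D‖) • (B - D)⟫ / ‖A - D‖) = -(lam * ‖w‖) := by
      rw [hdirAD, inner_neg_right, real_inner_smul_right, real_inner_self_eq_norm_sq,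
        hlamdef, hρt]
      field_simp
    rw [hfun, ← heq]
    exact hnormAD.const_mul (ν/(1-ν^2))
  -- derivative of the scalar ρ / ‖w‖
  have hσ : HasDerivAt (fun s => ρ s / ‖xT - xC s‖)
      (((-(lam * ‖w‖)) * ‖w‖ - ρ t * (-(lam * ‖w‖))) / ‖w‖^2) t := by
    have h := hρ'.div hnw' (by rw [← hwdef]; exact ne_of_gt hnw)
    rw [← hwdef] at h
    exact h
  -- assemble derivative of xB
  have hxBfun : xB = fun s => xC s + (ρ s / ‖xT - xC s‖) • (xT - xC s) := funext hB
  have htotal : HasDerivAt xB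
      (lam • w + ((ρ t / ‖w‖) • (-(lam • w)) +
        (((-(lam * ‖w‖)) * ‖w‖ - ρ t * (-(lam * ‖w‖))) / ‖w‖^2) • w)) t := by
    rw [hxBfun]
    have h := hcC.add (hσ.smul hw')
    rw [← hwdef] at h
    exact h
  convert htotal using 1
  match_scalars
  all_goals
    field_simp
    try ring
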